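/- For every k ∈ ℕ, the projected LMS update satisfies the one-step contraction inequality ‖θ̂_{k+1} − θ*‖² ≤ ‖θ̂_k − θ*‖² − μ‖D_k(θ* − θ̂_k)‖² + μ‖w_k‖². -/

import Mathlib

/-!
Projection onto the convex set `Θ ∋ θ*` is nonexpansive toward `θ*`, so it suffices to bound
`‖θ̃_{k+1} - θ*‖²`. With `e = θ* - θ̂_k` and `r = D_k e + w_k`, the cross term is
`-2μ ⟪D_k e, r⟫` (move `D_kᵀ` across the inner product) and the quadratic term is
`μ² ‖D_kᵀ r‖² ≤ μ ‖r‖²` because `μ ‖D_k‖² ≤ 1`; expanding `‖r‖²`, the `⟪D_k e, w_k⟫` terms cancel.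
-/

open Matrix Finset

/-- Euclidean norm of a vector in `ℝ^n`. -/
noncomputable def vnorm {n : ℕ} (v : Fin n → ℝ) : ℝ := Real.sqrt (∑ i, v i ^ 2)

/-- Spectral norm (ℓ²-operator norm) of a matrix. -/
noncomputable def specNorm {n d : ℕ} (D : Matrix (Fin n) (Fin d) ℝ) : ℝ :=
  ‖LinearMap.toContinuousLinearMap (Matrix.toEuclideanLin D)‖

open RealInnerProductSpace ContinuousLinearMap

section InnerProductSpace

variable {E F : Type*} [NormedAddCommGroup E] [InnerProductSpace ℝ E]
  [NormedAddCommGroup F] [InnerProductSpace ℝ F]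

theorem real_inner_le_zero_of_forall_norm_sub_le {K : Set E} (hK : Convex ℝ K) {u p : E}
    (hp : p ∈ K) (hmin : ∀ y ∈ K, ‖p - u‖ ≤ ‖y - u‖) : ∀ y ∈ K, ⟪u - p, y - p⟫ ≤ 0 := by
  have : Nonempty K := ⟨⟨p, hp⟩⟩
  refine (norm_eq_iInf_iff_real_inner_le_zero hK hp).mp (le_antisymm ?_ ?_)
  · exact le_ciInf fun y => by simpa only [norm_sub_rev u] using hmin y y.2
  · exact ciInf_le ⟨0, Set.forall_mem_range.2 fun _ => norm_nonneg _⟩ (⟨p, hp⟩ : K)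

theorem norm_sub_le_of_forall_norm_sub_le {K : Set E} (hK : Convex ℝ K) {u p t : E}
    (hp : p ∈ K) (hmin : ∀ y ∈ K, ‖p - u‖ ≤ ‖y - u‖) (ht : t ∈ K) : ‖p - t‖ ≤ ‖u - t‖ := by
  have hinner := real_inner_le_zero_of_forall_norm_sub_le hK hp hmin t ht
  have hexpand : ‖u - t‖ ^ 2 = ‖u - p‖ ^ 2 - 2 * ⟪u - p, t - p⟫ + ‖p - t‖ ^ 2 := by
    rw [show u - t = (u - p) - (t - p) by abel, norm_sub_sq_real, norm_sub_rev t p]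
  exact (sq_le_sq₀ (norm_nonneg _) (norm_nonneg _)).mp (by nlinarith [sq_nonneg ‖u - p‖])

variable [CompleteSpace E] [CompleteSpace F]

theorem norm_lms_step_sub_sq_le (L : E →L[ℝ] F) {μ : ℝ} (hμ : 0 ≤ μ) (hL : μ * ‖L‖ ^ 2 ≤ 1)
    (x t : E) (w : F) :
    ‖x + μ • adjoint L (L (t - x) + w) - t‖ ^ 2 ≤
      ‖x - t‖ ^ 2 - μ * ‖L (t - x)‖ ^ 2 + μ * ‖w‖ ^ 2 := by
  set e := t - x
  set r := L e + w
  have hinner : ⟪e, adjoint L r⟫ = ‖L e‖ ^ 2 + ⟪L e, w⟫ := by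
    rw [adjoint_inner_right, inner_add_right, real_inner_self_eq_norm_sq]
  have hadj : ‖adjoint L r‖ ≤ ‖L‖ * ‖r‖ := by
    simpa only [LinearIsometryEquiv.norm_map] using (adjoint L).le_opNorm r
  have hgain : μ ^ 2 * ‖adjoint L r‖ ^ 2 ≤ μ * ‖r‖ ^ 2 :=
    calc μ ^ 2 * ‖adjoint L r‖ ^ 2 = (μ * ‖adjoint L r‖) ^ 2 := by ring
      _ ≤ (μ * (‖L‖ * ‖r‖)) ^ 2 := by gcongr
      _ = μ * (μ * ‖L‖ ^ 2) * ‖r‖ ^ 2 := by ring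
      _ ≤ μ * ‖r‖ ^ 2 := by
          gcongr
          exact mul_le_of_le_one_right hμ hL
  have hr : ‖r‖ ^ 2 = ‖L e‖ ^ 2 + 2 * ⟪L e, w⟫ + ‖w‖ ^ 2 := norm_add_sq_real _ _
  have hexpand : ‖x + μ • adjoint L r - t‖ ^ 2 =
      ‖e‖ ^ 2 - 2 * μ * ⟪e, adjoint L r⟫ + μ ^ 2 * ‖adjoint L r‖ ^ 2 := by
    rw [show x + μ • adjoint L r - t = μ • adjoint L r - e by simp only [e]; abel,
      norm_sub_sq_real, norm_smul, real_inner_smul_left, real_inner_comm, Real.norm_eq_abs,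
      mul_pow, sq_abs]
    ring
  rw [hexpand, norm_sub_rev x t]
  nlinarith

end InnerProductSpace

theorem vnorm_eq_norm_toLp {n : ℕ} (v : Fin n → ℝ) : vnorm v = ‖WithLp.toLp 2 v‖ := by
  simp [vnorm, EuclideanSpace.norm_eq]

theorem adjoint_toEuclideanLin_toLp {n d : ℕ} (A : Matrix (Fin n) (Fin d) ℝ) (v : Fin n → ℝ) :
    adjoint (LinearMap.toContinuousLinearMap (toEuclideanLin A)) (WithLp.toLp 2 v) =
      WithLp.toLp 2 (Aᵀ *ᵥ v) := by
  rw [← LinearMap.adjoint_toContinuousLinearMap, ← toEuclideanLin_conjTranspose_eq_adjoint,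
    conjTranspose_eq_transpose_of_trivial]
  rfl

theorem lms_one_step_contraction_general
    {d n : ℕ}
    (Θ : Set (Fin d → ℝ)) (hΘconv : Convex ℝ Θ)
    (θstar : Fin d → ℝ) (hθstar : θstar ∈ Θ)
    (μ : ℝ) (hμ : 0 < μ)
    (D : ℕ → Matrix (Fin n) (Fin d) ℝ) (hD : ∀ k, μ * specNorm (D k) ^ 2 ≤ 1)
    (w : ℕ → (Fin n → ℝ))
    (θhat θtil : ℕ → (Fin d → ℝ))
    (hupd : ∀ k, θtil (k + 1) =
      θhat k + μ • (D k)ᵀ.mulVec ((D k).mulVec (θstar - θhat k) + w k))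
    (hproj_mem : ∀ k, θhat (k + 1) ∈ Θ)
    (hproj : ∀ k, ∀ θ ∈ Θ, vnorm (θhat (k + 1) - θtil (k + 1)) ≤ vnorm (θ - θtil (k + 1))) :
    ∀ k : ℕ,
      vnorm (θhat (k + 1) - θstar) ^ 2 ≤
        vnorm (θhat k - θstar) ^ 2 - μ * vnorm ((D k).mulVec (θstar - θhat k)) ^ 2 +
          μ * vnorm (w k) ^ 2 := by
  intro k
  set L := LinearMap.toContinuousLinearMap (toEuclideanLin (D k))
  have hK : Convex ℝ (WithLp.ofLp ⁻¹' Θ : Set (EuclideanSpace ℝ (Fin d))) :=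
    hΘconv.linear_preimage (WithLp.linearEquiv 2 ℝ (Fin d → ℝ)).toLinearMap
  have hstep : WithLp.toLp 2 (θtil (k + 1)) = WithLp.toLp 2 (θhat k) +
      μ • adjoint L (L (WithLp.toLp 2 θstar - WithLp.toLp 2 (θhat k)) + WithLp.toLp 2 (w k)) := by
    rw [hupd, ← WithLp.toLp_sub, WithLp.toLp_add, WithLp.toLp_smul]
    congr 2
    rw [← adjoint_toEuclideanLin_toLp, WithLp.toLp_add]
    rfl
  have hnonexp := norm_sub_le_of_forall_norm_sub_le hK (hproj_mem k)
    (fun θ hθ => by simpa only [vnorm_eq_norm_toLp, WithLp.toLp_sub] using hproj k _ hθ) hθstar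
  have hcontract := norm_lms_step_sub_sq_le L hμ.le (hD k)
    (WithLp.toLp 2 (θhat k)) (WithLp.toLp 2 θstar) (WithLp.toLp 2 (w k))
  rw [← hstep, ← WithLp.toLp_sub] at hcontract
  simp only [vnorm_eq_norm_toLp, WithLp.toLp_sub]
  calc _ ≤ ‖WithLp.toLp 2 (θtil (k + 1)) - WithLp.toLp 2 θstar‖ ^ 2 := by gcongr
    _ ≤ _ := hcontract

/-- one-step contraction of the projected LMS update. -/
theorem lms_one_step_contraction
    {d n : ℕ} (hd : 1 ≤ d) (hn : 1 ≤ n)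
    (Θ : Set (Fin d → ℝ)) (hΘne : Θ.Nonempty) (hΘcomp : IsCompact Θ) (hΘconv : Convex ℝ Θ)
    (θstar : Fin d → ℝ) (hθstar : θstar ∈ Θ)
    (μ : ℝ) (hμ : 0 < μ)
    (D : ℕ → Matrix (Fin n) (Fin d) ℝ) (hD : ∀ k, μ * specNorm (D k) ^ 2 ≤ 1)
    (w : ℕ → (Fin n → ℝ))
    (θhat θtil : ℕ → (Fin d → ℝ))
    (hθ0 : θhat 0 ∈ Θ)
    (hupd : ∀ k, θtil (k + 1) =
      θhat k + μ • (D k)ᵀ.mulVec ((D k).mulVec (θstar - θhat k) + w k))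
    (hproj_mem : ∀ k, θhat (k + 1) ∈ Θ)
    (hproj : ∀ k, ∀ θ ∈ Θ, vnorm (θhat (k + 1) - θtil (k + 1)) ≤ vnorm (θ - θtil (k + 1))) :
    ∀ k : ℕ,
      vnorm (θhat (k + 1) - θstar) ^ 2 ≤
        vnorm (θhat k - θstar) ^ 2 - μ * vnorm ((D k).mulVec (θstar - θhat k)) ^ 2 +
          μ * vnorm (w k) ^ 2 :=
  lms_one_step_contraction_general Θ hΘconv θstar hθstar μ hμ D hD w θhat θtil hupd hproj_mem hproj
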